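/- arXiv:1101.3879 — 2 statements merged into one kernel-verified Lean document; each statement's English description precedes it below -/
import Mathlib

section
/- Let E be a real Banach space ordered by a closed convex cone C = { x ∈ E : 0 ≤ x } with C ∩ (−C) = {0} and nonempty topological interior, and let K₁, K₂ : E → E be compact bounded linear operators such that K₁ is strongly positive and K₂ − K₁ is strongly positive (an operator T is strongly positive if T x lies in the interior of C for every x ∈ C \ {0}). If η > 0 is such that the spectral radius of η K₂ equals 1, then the operator id_E − η K₁ is invertible in the bounded linear operators on E. -/
/-!
Suppose `1 - ηK₁` is not invertible, and let `t₀ ≥ 1` be the largest point of the (compact, real)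
spectrum of `A = ηK₁`. For `t > t₀` the resolvent `(t - A)⁻¹` is positive, and since `t₀` is in
the spectrum its norm blows up as `t ↓ t₀`. Because the cone has an interior point, the norm of a
positive operator is controlled by its values on bounded positive vectors, so there are positive
unit vectors `w` with `(t - A) w → 0`; compactness of `A` turns them into a positive eigenvector
`A v = t₀ v`. Strong positivity of `B - A` (where `B = ηK₂`) then gives `B v ≥ (t₀ + δ) v` for some
`δ > 0`, while `(t₀ + δ - B)⁻¹` is positive because `t₀ + δ > 1 = r(B)`; applying it yields
`-v ≥ 0`, so `v = 0` by pointedness of the cone, a contradiction.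
-/

open Filter Topology Set

section

variable {E : Type*} [NormedAddCommGroup E] [NormedSpace ℝ E]

theorem exists_pos_sub_smul_mem_of_mem_interior {s : Set E} {p : E} (hp : p ∈ interior s)
    (v : E) : ∃ δ : ℝ, 0 < δ ∧ p - δ • v ∈ s := by
  have hlim : Tendsto (fun δ : ℝ => p - δ • v) (𝓝[>] 0) (𝓝 p) := by
    have hcont : Continuous fun δ : ℝ => p - δ • v := by fun_prop
    simpa using (hcont.tendsto 0).mono_left nhdsWithin_le_nhds
  obtain ⟨δ, hδs, hδ⟩ :=
    ((hlim.eventually (mem_interior_iff_mem_nhds.1 hp)).and self_mem_nhdsWithin).exists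
  exact ⟨δ, hδ, hδs⟩

theorem Convex.add_mem_of_smul_mem {C : Set E} (hC : Convex ℝ C)
    (hcone : ∀ x ∈ C, ∀ t : ℝ, 0 ≤ t → t • x ∈ C) {x y : E} (hx : x ∈ C) (hy : y ∈ C) :
    x + y ∈ C := by
  have hmid := hC hx hy (by norm_num : (0 : ℝ) ≤ 1 / 2) (by norm_num : (0 : ℝ) ≤ 1 / 2)
    (by norm_num)
  simpa [smul_add, smul_smul] using hcone _ hmid 2 zero_le_two

theorem ContinuousLinearMap.opNorm_le_of_closedBall_subset {F : Type*} [NormedAddCommGroup F]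
    [NormedSpace ℝ F] {S : Set E} {u₀ : E} {ρ M : ℝ} (hρ : 0 < ρ)
    (hball : Metric.closedBall u₀ ρ ⊆ S) (f : E →L[ℝ] F)
    (hf : ∀ d ∈ S, ‖d‖ ≤ ‖u₀‖ + ρ → ‖f d‖ ≤ M) : ‖f‖ ≤ 2 * M / ρ := by
  have hfu₀ : ‖f u₀‖ ≤ M := hf u₀ (hball (Metric.mem_closedBall_self hρ.le)) (by linarith)
  have hM : 0 ≤ M := (norm_nonneg _).trans hfu₀
  refine ContinuousLinearMap.opNorm_le_of_unit_norm (by positivity) fun x hx => ?_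
  have hρx : ‖ρ • x‖ = ρ := by rw [norm_smul, hx, Real.norm_of_nonneg hρ.le, mul_one]
  have hy : u₀ + ρ • x ∈ S := hball (by simp [dist_eq_norm, hρx])
  have hfy : ‖f (u₀ + ρ • x)‖ ≤ M := hf _ hy ((norm_add_le _ _).trans_eq (by rw [hρx]))
  have hfx : f x = ρ⁻¹ • (f (u₀ + ρ • x) - f u₀) := by
    rw [map_add, map_smul, add_sub_cancel_left, inv_smul_smul₀ hρ.ne']
  calc ‖f x‖ = ρ⁻¹ * ‖f (u₀ + ρ • x) - f u₀‖ := by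
        rw [hfx, norm_smul, Real.norm_of_nonneg (inv_nonneg.2 hρ.le)]
    _ ≤ ρ⁻¹ * (M + M) := by gcongr; exact (norm_sub_le _ _).trans (add_le_add hfy hfu₀)
    _ = 2 * M / ρ := by ring

end

theorem ContinuousLinearMap.isClosed_setOf_mapsTo {𝕜 E F : Type*} [NontriviallyNormedField 𝕜]
    [NormedAddCommGroup E] [NormedSpace 𝕜 E] [NormedAddCommGroup F] [NormedSpace 𝕜 F]
    (s : Set E) {t : Set F} (ht : IsClosed t) : IsClosed {T : E →L[𝕜] F | MapsTo T s t} := by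
  simp only [MapsTo, ofPred_forall]
  exact isClosed_biInter fun x _ => ht.preimage (continuous_eval_const x)

namespace spectrum

variable {𝕜 A : Type*} [NormedField 𝕜] [NormedRing A] [NormedAlgebra 𝕜 A]

theorem algebraMap_sub_eq_mul_one_sub {a : A} {s : 𝕜} (hs : s ∈ resolventSet 𝕜 a) (t : 𝕜) :
    algebraMap 𝕜 A t - a = (algebraMap 𝕜 A s - a) * (1 - (s - t) • resolvent a s) := by
  rw [mul_sub, mul_one, mul_smul_comm, resolvent, Ring.mul_inverse_cancel _ hs,
    Algebra.algebraMap_eq_smul_one, Algebra.algebraMap_eq_smul_one, sub_smul]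
  abel

theorem one_le_norm_sub_mul_norm_resolvent [CompleteSpace A] {a : A} {s t : 𝕜}
    (ht : t ∈ spectrum 𝕜 a) (hs : s ∈ resolventSet 𝕜 a) :
    1 ≤ ‖s - t‖ * ‖resolvent a s‖ := by
  by_contra! h
  refine ht ?_
  rw [mem_resolventSet_iff, algebraMap_sub_eq_mul_one_sub hs t]
  exact hs.mul (isUnit_one_sub_of_norm_lt_one ((norm_smul_le _ _).trans_lt h))

end spectrum

theorem IsCompactOperator.exists_eigenvector_of_tendsto {𝕜 E : Type*} [NontriviallyNormedField 𝕜]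
    [NormedAddCommGroup E] [NormedSpace 𝕜 E] {A : E →L[𝕜] E} (hA : IsCompactOperator A)
    {S : Set E} (hS : IsClosed S) {t : ℕ → 𝕜} {t₀ : 𝕜} (ht : Tendsto t atTop (𝓝 t₀))
    (ht₀ : t₀ ≠ 0) {w : ℕ → E} (hwS : ∀ n, w n ∈ S) (hw : ∀ n, ‖w n‖ = 1)
    (hAw : Tendsto (fun n => t n • w n - A (w n)) atTop (𝓝 0)) :
    ∃ v ∈ S, ‖v‖ = 1 ∧ A v = t₀ • v := by
  obtain ⟨L, hL, hAL⟩ := hA.image_closedBall_subset_compact (f := (A : E →ₗ[𝕜] E)) 1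
  obtain ⟨z, -, φ, hφ, hz⟩ := hL.tendsto_subseq fun n => hAL ⟨w n, by simp [hw n], rfl⟩
  have hφ' := hφ.tendsto_atTop
  have hv : Tendsto (fun n => w (φ n)) atTop (𝓝 (t₀⁻¹ • z)) := by
    have h := ((ht.comp hφ').inv₀ ht₀).smul (hz.add (hAw.comp hφ'))
    rw [add_zero] at h
    refine h.congr' ((hφ'.eventually (ht.eventually_ne ht₀)).mono fun n hn => ?_)
    simp only [Function.comp_apply, ContinuousLinearMap.coe_coe] at hn ⊢
    rw [add_sub_cancel, inv_smul_smul₀ hn]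
  refine ⟨t₀⁻¹ • z, hS.mem_of_tendsto hv (.of_forall fun n => hwS (φ n)), ?_, ?_⟩
  · exact (by simpa [hw] using hv.norm : (1 : ℝ) = _).symm
  · rw [smul_inv_smul₀ ht₀]
    exact tendsto_nhds_unique ((A.continuous.tendsto _).comp hv) hz

section Cone

variable {E : Type*} [NormedAddCommGroup E] [NormedSpace ℝ E] (K : PointedCone ℝ E)

open Pointwise in
theorem PointedCone.smul_mem_interior {c : ℝ} (hc : 0 < c) {x : E}
    (hx : x ∈ interior (K : Set E)) : c • x ∈ interior (K : Set E) := by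
  have hsub : c • (K : Set E) ⊆ K := by
    rintro _ ⟨y, hy, rfl⟩
    exact K.smul_mem hc.le hy
  exact interior_mono hsub (interior_smul₀ hc.ne' (K : Set E) ▸ smul_mem_smul_set hx)

theorem mapsTo_of_forall_ne_zero_mem_interior {T : E →L[ℝ] E}
    (hT : ∀ x ∈ K, x ≠ 0 → T x ∈ interior (K : Set E)) : MapsTo T K K := by
  intro x hx
  rcases eq_or_ne x 0 with rfl | hx0
  · simp
  · exact interior_subset (hT x hx hx0)

theorem exists_mem_norm_eq_one_norm_sub_le {u₀ : E} {ρ : ℝ} (hρ : 0 < ρ)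
    (hball : Metric.closedBall u₀ ρ ⊆ K) {A : E →L[ℝ] E} {s : ℝ} (hs : s ∈ resolventSet ℝ A)
    (hsK : MapsTo ⇑(resolvent A s) K K) (hR : resolvent A s ≠ 0) :
    ∃ w ∈ K, ‖w‖ = 1 ∧ ρ * ‖resolvent A s‖ * ‖s • w - A w‖ ≤ 4 * (‖u₀‖ + ρ) := by
  set R := resolvent A s
  obtain ⟨d, hdK, hdnorm, hRd⟩ : ∃ d ∈ K, ‖d‖ ≤ ‖u₀‖ + ρ ∧ ρ * ‖R‖ < 4 * ‖R d‖ := by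
    by_contra! h
    have hle := R.opNorm_le_of_closedBall_subset hρ hball fun d hd hd' =>
      (le_div_iff₀' four_pos).2 (h d hd hd')
    have hRpos : 0 < ‖R‖ := norm_pos_iff.2 hR
    have heq : 2 * (ρ * ‖R‖ / 4) / ρ = ‖R‖ / 2 := by field_simp; ring
    linarith
  have hRd0 : 0 < ‖R d‖ := by nlinarith [norm_nonneg R]
  refine ⟨‖R d‖⁻¹ • R d, K.smul_mem (by positivity) (hsK hdK), by simp [norm_smul, hRd0.ne'], ?_⟩
  have hRd_eq : s • R d - A (R d) = d := by
    simpa [R, resolvent] using congr($(Ring.mul_inverse_cancel _ hs) d)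
  rw [map_smul, smul_comm, ← smul_sub, hRd_eq, norm_smul, norm_inv, norm_norm]
  calc ρ * ‖R‖ * (‖R d‖⁻¹ * ‖d‖) = ρ * ‖R‖ / ‖R d‖ * ‖d‖ := by ring
    _ ≤ 4 * (‖u₀‖ + ρ) := by
        gcongr
        exact (div_le_iff₀ hRd0).2 hRd.le

variable [CompleteSpace E]

theorem mapsTo_ring_inverse_one_sub (hK : IsClosed (K : Set E)) {u : E →L[ℝ] E} (hu : ‖u‖ < 1)
    (huK : MapsTo u K K) : MapsTo ⇑(Ring.inverse (1 - u)) K K := by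
  intro x hx
  have hsum : HasSum (fun n => (u ^ n) x) (Ring.inverse (1 - u) x) := by
    simpa using (hasSum_geom_series_inverse u hu).mapL (ContinuousLinearMap.apply ℝ E x)
  rw [← hsum.tsum_eq]
  exact tsum_mem hK fun n => by rw [FunLike.coe_pow_eq_iterate]; exact huK.iterate n hx

theorem mapsTo_resolvent_of_norm_lt (hK : IsClosed (K : Set E)) {T : E →L[ℝ] E}
    (hT : MapsTo T K K) {s : ℝ} (hs : ‖T‖ < s) : MapsTo ⇑(resolvent T s) K K := by
  have hs0 : 0 < s := (norm_nonneg T).trans_lt hs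
  have hres : resolvent T s = s⁻¹ • Ring.inverse (1 - s⁻¹ • T) := by
    have := spectrum.units_smul_resolvent_self (r := Units.mk0 s hs0.ne') (a := T)
    simp only [Units.smul_def, Units.val_mk0, Units.val_inv_eq_inv_val] at this
    rw [eq_inv_smul_iff₀ hs0.ne', this, resolvent, map_one]
  have hu : ‖s⁻¹ • T‖ < 1 := by
    rwa [norm_smul, Real.norm_of_nonneg (inv_nonneg.2 hs0.le), inv_mul_lt_iff₀ hs0, mul_one]
  rw [hres]
  exact fun x hx => K.smul_mem (inv_nonneg.2 hs0.le)
    (mapsTo_ring_inverse_one_sub K hK hu (fun y hy => K.smul_mem (inv_nonneg.2 hs0.le) (hT hy)) hx)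

theorem mapsTo_resolvent_of_le (hK : IsClosed (K : Set E)) {T : E →L[ℝ] E} {s t : ℝ}
    (hs : s ∈ resolventSet ℝ T) (hsK : MapsTo ⇑(resolvent T s) K K) (hts : t ≤ s)
    (hst : (s - t) * ‖resolvent T s‖ < 1) : MapsTo ⇑(resolvent T t) K K := by
  have hu : ‖(s - t) • resolvent T s‖ < 1 := by
    rwa [norm_smul, Real.norm_of_nonneg (sub_nonneg.2 hts)]
  have hres : resolvent T t = Ring.inverse (1 - (s - t) • resolvent T s) * resolvent T s := by
    rw [resolvent, spectrum.algebraMap_sub_eq_mul_one_sub hs t, Ring.inverse_mul (.inl hs)]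
    rfl
  rw [hres]
  exact (mapsTo_ring_inverse_one_sub K hK hu
    fun x hx => K.smul_mem (sub_nonneg.2 hts) (hsK hx)).comp hsK

/-- Positivity of the resolvent is pushed down from a large `M`, where the Neumann series gives
it, to `τ`: on `[τ, M]` it is a closed condition and it propagates a little to the left. -/
theorem mapsTo_resolvent_of_Ioi_subset (hK : IsClosed (K : Set E)) {T : E →L[ℝ] E}
    (hT : MapsTo T K K) {c : ℝ} (hc : Ioi c ⊆ resolventSet ℝ T) {τ : ℝ} (hτ : c < τ) :
    MapsTo ⇑(resolvent T τ) K K := by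
  obtain ⟨M, hτM, hTM⟩ : ∃ M, τ ≤ M ∧ ‖T‖ < M :=
    ⟨max τ (‖T‖ + 1), le_max_left _ _, (lt_add_one _).trans_le (le_max_right _ _)⟩
  have hclosed : IsClosed ({t | MapsTo ⇑(resolvent T t) K K} ∩ Icc τ M) := by
    have hcont : ContinuousOn (resolvent T) (Icc τ M) := fun t ht =>
      (spectrum.hasDerivAt_resolvent_const_left (hc (hτ.trans_le ht.1))).continuousAt
        |>.continuousWithinAt
    rw [inter_comm]
    exact hcont.preimage_isClosed_of_isClosed isClosed_Icc
      (ContinuousLinearMap.isClosed_setOf_mapsTo _ hK)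
  refine hclosed.mem_of_ge_of_forall_exists_lt (mapsTo_resolvent_of_norm_lt K hK hT hTM) hτM ?_
  rintro s ⟨hsK, hτs, -⟩
  have hs : s ∈ resolventSet ℝ T := hc (hτ.trans hτs)
  have hsmall : Tendsto (fun t => (s - t) * ‖resolvent T s‖) (𝓝 s) (𝓝 0) := by
    have hcont : Continuous fun t => (s - t) * ‖resolvent T s‖ := by fun_prop
    simpa using hcont.tendsto s
  have hnear : ∀ᶠ t in 𝓝[<] s, τ ≤ t ∧ (s - t) * ‖resolvent T s‖ < 1 :=
    nhdsWithin_le_nhds ((eventually_ge_nhds hτs).and (hsmall.eventually (gt_mem_nhds one_pos)))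
  obtain ⟨t, ⟨hτt, hst⟩, hts⟩ := (hnear.and self_mem_nhdsWithin).exists
  exact ⟨t, mapsTo_resolvent_of_le K hK hs hsK hts.le hst, hτt, hts⟩

theorem eq_zero_of_sub_smul_mem (hK : IsClosed (K : Set E)) (hKs : (K : ConvexCone ℝ E).Salient)
    {T : E →L[ℝ] E} (hT : MapsTo T K K) {c : ℝ} (hc : Ioi c ⊆ resolventSet ℝ T) {s : ℝ}
    (hs : c < s) {v : E} (hv : v ∈ K) (hTv : T v - s • v ∈ K) : v = 0 := by
  have hinv : resolvent T s (T v - s • v) = -v := by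
    have h : resolvent T s (s • v - T v) = v := by
      simpa [resolvent] using congr($(Ring.inverse_mul_cancel _ (hc hs)) v)
    rw [← neg_sub, map_neg, h]
  by_contra hv0
  exact hKs v hv hv0 (hinv ▸ mapsTo_resolvent_of_Ioi_subset K hK hT hc hs hTv)

theorem exists_mem_ne_zero_apply_eq_smul (hK : IsClosed (K : Set E))
    (hKint : (interior (K : Set E)).Nonempty) {A : E →L[ℝ] E} (hA : IsCompactOperator A)
    (hAK : MapsTo A K K) {t₀ : ℝ} (ht₀ : t₀ ∈ spectrum ℝ A) (ht₀0 : t₀ ≠ 0)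
    (hgt : Ioi t₀ ⊆ resolventSet ℝ A) : ∃ v ∈ K, v ≠ 0 ∧ A v = t₀ • v := by
  obtain ⟨u₀, hu₀⟩ := hKint
  obtain ⟨ρ, hρ, hball⟩ :=
    Metric.nhds_basis_closedBall.mem_iff.1 (mem_interior_iff_mem_nhds.1 hu₀)
  set t : ℕ → ℝ := fun n => t₀ + 1 / (n + 1)
  have ht : ∀ n, t n ∈ Ioi t₀ := fun n => by
    simp only [t, mem_Ioi]; linarith [Nat.one_div_pos_of_nat (α := ℝ) (n := n)]
  have hRnorm : ∀ n : ℕ, (n + 1 : ℝ) ≤ ‖resolvent A (t n)‖ := fun n => by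
    have h := spectrum.one_le_norm_sub_mul_norm_resolvent ht₀ (hgt (ht n))
    simp only [t, add_sub_cancel_left, norm_div, norm_one] at h
    rwa [Real.norm_of_nonneg (by positivity), one_div_mul_eq_div, one_le_div (by positivity)] at h
  choose w hwK hw hwle using fun n => exists_mem_norm_eq_one_norm_sub_le K hρ hball (hgt (ht n))
    (mapsTo_resolvent_of_Ioi_subset K hK hAK hgt (ht n))
    (norm_pos_iff.1 ((Nat.cast_add_one_pos n).trans_le (hRnorm n)))
  have hlim : Tendsto (fun n => t n • w n - A (w n)) atTop (𝓝 0) := by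
    refine squeeze_zero_norm (fun n => ?_) (by simpa using
      (tendsto_one_div_add_atTop_nhds_zero_nat (𝕜 := ℝ)).const_mul (4 * (‖u₀‖ + ρ) / ρ))
    rw [div_mul_eq_mul_div, le_div_iff₀ hρ, ← div_eq_mul_inv, le_div_iff₀ (Nat.cast_add_one_pos n)]
    calc ‖t n • w n - A (w n)‖ * ρ * (n + 1)
        = ρ * (n + 1) * ‖t n • w n - A (w n)‖ := by ring
      _ ≤ ρ * ‖resolvent A (t n)‖ * ‖t n • w n - A (w n)‖ := by gcongr; exact hRnorm n
      _ ≤ 4 * (‖u₀‖ + ρ) := hwle n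
  obtain ⟨v, hvK, hv1, hAv⟩ := hA.exists_eigenvector_of_tendsto hK
    (by simpa [t] using tendsto_one_div_add_atTop_nhds_zero_nat.const_add t₀) ht₀0 hwK hw hlim
  exact ⟨v, hvK, norm_ne_zero_iff.1 (by simp [hv1]), hAv⟩

theorem lt_of_mem_spectrum_of_strictly_dominated (hK : IsClosed (K : Set E))
    (hKs : (K : ConvexCone ℝ E).Salient) (hKint : (interior (K : Set E)).Nonempty)
    {A B : E →L[ℝ] E} (hA : IsCompactOperator A) (hAK : MapsTo A K K)
    (hBA : ∀ x ∈ K, x ≠ 0 → (B - A) x ∈ interior (K : Set E)) {c : ℝ} (hc : 0 < c)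
    (hB : Ioi c ⊆ resolventSet ℝ B) {t : ℝ} (ht : t ∈ spectrum ℝ A) : t < c := by
  by_contra! hct
  obtain ⟨t₀, ht₀, ht₀max⟩ := (spectrum.isCompact A).exists_isGreatest ⟨t, ht⟩
  have hct₀ : c ≤ t₀ := hct.trans (ht₀max ht)
  have hgt : Ioi t₀ ⊆ resolventSet ℝ A := by
    intro s hs
    by_contra hsσ
    exact not_le.2 hs (ht₀max hsσ)
  obtain ⟨v, hvK, hv0, hAv⟩ :=
    exists_mem_ne_zero_apply_eq_smul K hK hKint hA hAK ht₀ (hc.trans_le hct₀).ne' hgt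
  obtain ⟨δ, hδ, hδv⟩ := exists_pos_sub_smul_mem_of_mem_interior (hBA v hvK hv0) v
  have hBK : MapsTo B K K := fun x hx => by
    simpa using K.add_mem (hAK hx) (mapsTo_of_forall_ne_zero_mem_interior K hBA hx)
  have hBv : B v - (t₀ + δ) • v ∈ K := by
    rwa [add_smul, ← hAv, ← sub_sub, ← sub_apply]
  exact hv0 (eq_zero_of_sub_smul_mem K hK hKs hBK hB (by linarith) hvK hBv)

end Cone

theorem stmt_5_general
    {E : Type*} [NormedAddCommGroup E] [NormedSpace ℝ E] [CompleteSpace E]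
    (C : Set E) (hCclosed : IsClosed C) (hCconvex : Convex ℝ C)
    (hCcone : ∀ x ∈ C, ∀ t : ℝ, 0 ≤ t → t • x ∈ C)
    (hCpointed : C ∩ (-C) = {0})
    (hCint : (interior C).Nonempty)
    (K₁ K₂ : E →L[ℝ] E)
    (hK₁compact : IsCompactOperator (K₁ : E → E))
    (hK₁pos : ∀ x ∈ C, x ≠ 0 → K₁ x ∈ interior C)
    (hdiffpos : ∀ x ∈ C, x ≠ 0 → (K₂ - K₁) x ∈ interior C)
    (η : ℝ) (hη : 0 < η)
    (hr : spectralRadius ℝ (η • K₂) = 1) :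
    IsUnit ((1 : E →L[ℝ] E) - η • K₁) := by
  have h0 : (0 : E) ∈ C := (hCpointed.symm ▸ rfl : (0 : E) ∈ C ∩ -C).1
  let K : PointedCone ℝ E := .ofConeComb C ⟨0, h0⟩ fun x hx y hy a ha b hb =>
    hCconvex.add_mem_of_smul_mem hCcone (hCcone x hx a ha) (hCcone y hy b hb)
  have hKs : (K : ConvexCone ℝ E).Salient := K.salient_iff_inter_neg_eq_singleton.2 hCpointed
  have hAK : MapsTo ⇑(η • K₁) K K := fun x hx =>
    K.smul_mem hη.le (mapsTo_of_forall_ne_zero_mem_interior K hK₁pos hx)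
  have hBA : ∀ x ∈ K, x ≠ 0 → (η • K₂ - η • K₁) x ∈ interior (K : Set E) := fun x hx hx0 => by
    simpa [smul_sub] using K.smul_mem_interior hη (hdiffpos x hx hx0)
  have hB : Ioi 1 ⊆ resolventSet ℝ (η • K₂) := fun s hs =>
    spectrum.mem_resolventSet_of_spectralRadius_lt
      (by rw [hr]; exact_mod_cast hs.trans_le (Real.le_norm_self s))
  have h1 : (1 : ℝ) ∉ spectrum ℝ (η • K₁) := fun h1 =>
    (lt_of_mem_spectrum_of_strictly_dominated K hCclosed hKs hCint
      (by simpa using hK₁compact.smul η) hAK hBA one_pos hB h1).false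
  simpa using spectrum.notMem_iff.1 h1

/-- Let `E` be a real Banach space ordered by a closed convex cone `C`
with `C ∩ (-C) = {0}` and nonempty interior, and let `K₁, K₂` be compact bounded linear
operators on `E` such that `K₁` is strongly positive and `K₂ - K₁` is strongly positive.
If `η > 0` is such that the spectral radius of `η • K₂` equals `1`, then `id - η • K₁` is
invertible in the bounded linear operators on `E`. -/
theorem stmt_5
    {E : Type*} [NormedAddCommGroup E] [NormedSpace ℝ E] [CompleteSpace E]
    (C : Set E) (hCclosed : IsClosed C) (hCconvex : Convex ℝ C)
    (hCcone : ∀ x ∈ C, ∀ t : ℝ, 0 ≤ t → t • x ∈ C)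
    (hCpointed : C ∩ (-C) = {0})
    (hCint : (interior C).Nonempty)
    (K₁ K₂ : E →L[ℝ] E)
    (hK₁compact : IsCompactOperator (K₁ : E → E))
    (hK₂compact : IsCompactOperator (K₂ : E → E))
    (hK₁pos : ∀ x ∈ C, x ≠ 0 → K₁ x ∈ interior C)
    (hdiffpos : ∀ x ∈ C, x ≠ 0 → (K₂ - K₁) x ∈ interior C)
    (η : ℝ) (hη : 0 < η)
    (hr : spectralRadius ℝ (η • K₂) = 1) :
    IsUnit ((1 : E →L[ℝ] E) - η • K₁) :=
  stmt_5_general C hCclosed hCconvex hCcone hCpointed hCint K₁ K₂ hK₁compact hK₁pos hdiffpos η hη hr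
end

section
/- Let E be a real Banach space and C ⊆ E a closed convex cone. Let T > 0, let f : [0, T] → E be Bochner integrable on [0, T] and continuous on (0, T], with f(a) ∈ C for all a ∈ [0, T] and f(a) in the topological interior of C for all a ∈ (0, T]. Let b : [0, T] → ℝ be measurable, bounded and nonnegative, and suppose there exists δ ∈ (0, T) such that b(a) > 0 for almost every a ∈ (T − δ, T). Then the Bochner integral ∫₀ᵀ b(a) f(a) da belongs to the interior of C. -/
open MeasureTheory Set Pointwise

/-! A point `x` outside the open convex cone `interior C` is separated from it by a functional
`L` with `L x ≤ 0 < L` on `interior C`. Applied to `x = ∫ b • f`, this gives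
`L x = ∫ b (L ∘ f)`, which is positive because `L ∘ f > 0` on `(0, T]` and `b > 0` on a set of
positive measure. -/

theorem smul_mem_interior_of_cone {E : Type*} [TopologicalSpace E] [AddCommGroup E]
    [Module ℝ E] [ContinuousConstSMul ℝ E] {C : Set E}
    (hC : ∀ x ∈ C, ∀ t : ℝ, 0 ≤ t → t • x ∈ C)
    {t : ℝ} (ht : 0 < t) {y : E} (hy : y ∈ interior C) : t • y ∈ interior C := by
  have hty : t • y ∈ interior (t • C) := interior_smul₀ ht.ne' C ▸ smul_mem_smul_set hy
  exact interior_mono (smul_set_subset_iff.2 fun x hx => hC x hx t ht.le) hty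

theorem exists_strongDual_nonpos_of_notMem_of_isOpen_cone {E : Type*} [TopologicalSpace E]
    [AddCommGroup E] [Module ℝ E] [IsTopologicalAddGroup E] [ContinuousSMul ℝ E] {U : Set E}
    (hUo : IsOpen U) (hUc : Convex ℝ U) (hU : ∀ y ∈ U, ∀ t : ℝ, 0 < t → t • y ∈ U)
    {x : E} (hx : x ∉ U) : ∃ L : StrongDual ℝ E, L x ≤ 0 ∧ ∀ y ∈ U, 0 < L y := by
  obtain rfl | ⟨y₀, hy₀⟩ := U.eq_empty_or_nonempty
  · exact ⟨0, le_rfl, by simp⟩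
  obtain ⟨L, hL⟩ := geometric_hahn_banach_point_open hUc hUo hx
  have hray : ∀ y ∈ U, ∀ t : ℝ, 0 < t → L x < t * L y := fun y hy t ht => by
    simpa using hL _ (hU y hy t ht)
  have hLx : L x ≤ 0 := by
    have hlim : Filter.Tendsto (fun t : ℝ => t * L y₀) (nhdsWithin 0 (Ioi 0)) (nhds 0) :=
      tendsto_nhdsWithin_of_tendsto_nhds ((continuous_mul_const (L y₀)).tendsto' 0 0 (zero_mul _))
    exact ge_of_tendsto hlim (eventually_nhdsWithin_of_forall fun t ht => (hray y₀ hy₀ t ht).le)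
  have hnonneg : ∀ y ∈ U, 0 ≤ L y := fun y hy => by
    by_contra! h
    have := hray y hy ((L x - 1) / L y) (div_pos_of_neg_of_neg (by linarith) h)
    rw [div_mul_cancel₀ _ h.ne] at this
    linarith
  have hLne : L ≠ 0 := by
    rintro rfl
    simpa using hL y₀ hy₀
  -- A nonzero functional is an open map, so `L '' U ⊆ [0, ∞)` forces `L '' U ⊆ (0, ∞)`.
  have himage : L '' U ⊆ Ioi 0 := interior_Ici (a := (0 : ℝ)) ▸
    interior_maximal (image_subset_iff.2 hnonneg) (L.isOpenMap_of_ne_zero hLne U hUo)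
  exact ⟨L, hLx, fun y hy => himage (mem_image_of_mem L hy)⟩

theorem setIntegral_pos_of_ae_pos_on_subset {X : Type*} [MeasurableSpace X] {μ : Measure X}
    {f : X → ℝ} {s t : Set X} (hf : 0 ≤ᵐ[μ.restrict s] f) (hfi : IntegrableOn f s μ)
    (ht : MeasurableSet t) (hts : t ⊆ s) (hμt : μ t ≠ 0)
    (hpos : ∀ᵐ x ∂μ.restrict t, 0 < f x) :
    0 < ∫ x in s, f x ∂μ := by
  rw [setIntegral_pos_iff_support_of_nonneg_ae hf hfi]
  refine (pos_iff_ne_zero.2 hμt).trans_le (measure_mono_ae ?_)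
  filter_upwards [(ae_restrict_iff' ht).1 hpos] with x hx hxt
  exact ⟨(hx hxt).ne', hts hxt⟩

theorem stmt_7_general
    {E : Type*} [NormedAddCommGroup E] [NormedSpace ℝ E] [CompleteSpace E]
    (C : Set E) (hCconvex : Convex ℝ C)
    (hCsmul : ∀ x ∈ C, ∀ t : ℝ, 0 ≤ t → t • x ∈ C)
    (T : ℝ)
    (f : ℝ → E)
    (hfint : IntegrableOn f (Set.Icc 0 T) volume)
    (hfintC : ∀ a ∈ Set.Ioc 0 T, f a ∈ interior C)
    (b : ℝ → ℝ)
    (hbmeas : AEMeasurable b (volume.restrict (Set.Icc 0 T)))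
    (hbbdd : ∃ M : ℝ, ∀ a ∈ Set.Icc 0 T, |b a| ≤ M)
    (hbnonneg : ∀ a ∈ Set.Icc 0 T, 0 ≤ b a)
    (hbpos : ∃ δ : ℝ, 0 < δ ∧ δ < T ∧
      ∀ᵐ a ∂(volume.restrict (Set.Ioo (T - δ) T)), 0 < b a) :
    (∫ a in Set.Icc 0 T, b a • f a) ∈ interior C := by
  obtain ⟨M, hM⟩ := hbbdd
  obtain ⟨δ, hδ, hδT, hbδ⟩ := hbpos
  have hbf : IntegrableOn (fun a => b a • f a) (Icc 0 T) :=
    hfint.bdd_smul M hbmeas.aestronglyMeasurable (ae_restrict_of_forall_mem measurableSet_Icc hM)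
  by_contra hx
  obtain ⟨L, hLx, hLpos⟩ := exists_strongDual_nonpos_of_notMem_of_isOpen_cone isOpen_interior
    hCconvex.interior (fun y hy t ht => smul_mem_interior_of_cone hCsmul ht hy) hx
  have hLint : L (∫ a in Icc 0 T, b a • f a) = ∫ a in Ioc 0 T, b a * L (f a) := by
    rw [← L.integral_comp_comm hbf, integral_Icc_eq_integral_Ioc]
    simp
  have hpos : 0 < ∫ a in Ioc 0 T, b a * L (f a) := by
    refine setIntegral_pos_of_ae_pos_on_subset (t := Ioo (T - δ) T) ?_ ?_ measurableSet_Ioo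
      (fun a ha => ⟨by linarith [ha.1], ha.2.le⟩) (by simpa [Real.volume_Ioo] using hδ) ?_
    · exact ae_restrict_of_forall_mem measurableSet_Ioc fun a ha =>
        mul_nonneg (hbnonneg a (Ioc_subset_Icc_self ha)) (hLpos _ (hfintC a ha)).le
    · simpa using IntegrableOn.mono_set (L.integrable_comp hbf) Ioc_subset_Icc_self
    · filter_upwards [hbδ, ae_restrict_mem measurableSet_Ioo] with a hba ha
      exact mul_pos hba (hLpos _ (hfintC a ⟨by linarith [ha.1], ha.2.le⟩))
  linarith

/-- Let `E` be a real Banach space and `C ⊆ E` a closed convex cone.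
Let `T > 0`, let `f : [0, T] → E` be Bochner integrable on `[0, T]` and continuous on
`(0, T]`, with `f a ∈ C` for all `a ∈ [0, T]` and `f a ∈ interior C` for all `a ∈ (0, T]`.
Let `b : [0, T] → ℝ` be measurable, bounded and nonnegative, with `b a > 0` for almost
every `a` in some interval `(T - δ, T)` with `0 < δ < T`. Then
`∫₀ᵀ b a • f a da ∈ interior C`. -/
theorem stmt_7
    {E : Type*} [NormedAddCommGroup E] [NormedSpace ℝ E] [CompleteSpace E]
    (C : Set E) (hCclosed : IsClosed C) (hCconvex : Convex ℝ C)
    (hCadd : ∀ x ∈ C, ∀ y ∈ C, x + y ∈ C)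
    (hCsmul : ∀ x ∈ C, ∀ t : ℝ, 0 ≤ t → t • x ∈ C)
    (T : ℝ) (hT : 0 < T)
    (f : ℝ → E)
    (hfint : IntegrableOn f (Set.Icc 0 T) volume)
    (hfcont : ContinuousOn f (Set.Ioc 0 T))
    (hfC : ∀ a ∈ Set.Icc 0 T, f a ∈ C)
    (hfintC : ∀ a ∈ Set.Ioc 0 T, f a ∈ interior C)
    (b : ℝ → ℝ)
    (hbmeas : AEMeasurable b (volume.restrict (Set.Icc 0 T)))
    (hbbdd : ∃ M : ℝ, ∀ a ∈ Set.Icc 0 T, |b a| ≤ M)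
    (hbnonneg : ∀ a ∈ Set.Icc 0 T, 0 ≤ b a)
    (hbpos : ∃ δ : ℝ, 0 < δ ∧ δ < T ∧
      ∀ᵐ a ∂(volume.restrict (Set.Ioo (T - δ) T)), 0 < b a) :
    (∫ a in Set.Icc 0 T, b a • f a) ∈ interior C :=
  stmt_7_general C hCconvex hCsmul T f hfint hfintC b hbmeas hbbdd hbnonneg hbpos
end
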